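/- arXiv:2505.22399 — 3 statements merged into one kernel-verified Lean document; each statement's English description precedes it below -/
import Mathlib

section
/- Let J be a real n×n matrix whose symmetric part is negative definite, with e1 = -λ_max(J) > 0 and e2 = -λ_min(J) > 0 defined via the eigenvalues of its symmetric part. Suppose P is a symmetric positive definite matrix satisfying the Lyapunov equation P J + Jᵀ P = -I. Then for all vectors x, (1/(2 e2)) ‖x‖² ≤ xᵀ P x ≤ (1/(2 e1)) ‖x‖². -/
/-!
If `P v = μ v` with `‖v‖ = 1`, evaluating the Lyapunov equation at `v` gives
`2 μ ⟪v, J v⟫ = -1`, so `μ = 1 / (-2 ⟪v, J v⟫)` lies in `[1 / (2 e2), 1 / (2 e1)]`.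
Expanding `x` in an orthonormal eigenbasis of the symmetric matrix `P` turns these eigenvalue
bounds into the bounds on `xᵀ P x`.
-/

open Matrix
open scoped RealInnerProductSpace

theorem Matrix.dotProduct_mulVec_mul_add_transpose_mul {R ι : Type*} [CommSemiring R] [Fintype ι]
    {P : Matrix ι ι R} (hP : P.IsSymm) (J : Matrix ι ι R) {v : ι → R} {μ : R}
    (hv : P *ᵥ v = μ • v) :
    v ⬝ᵥ (P * J + Jᵀ * P) *ᵥ v = 2 * μ * (v ⬝ᵥ J *ᵥ v) := by
  have hPv : v ᵥ* P = μ • v := by rw [← mulVec_transpose, hP.eq, hv]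
  rw [add_mulVec, dotProduct_add, ← mulVec_mulVec, ← mulVec_mulVec, hv, dotProduct_mulVec,
    hPv, dotProduct_mulVec v Jᵀ, vecMul_transpose, dotProduct_smul, smul_dotProduct,
    dotProduct_comm (J *ᵥ v), smul_eq_mul]
  ring

theorem one_div_two_mul_mem_Icc_of_two_mul_mul_eq_neg_one {μ q e1 e2 : ℝ} (he1 : 0 < e1)
    (hq : q ∈ Set.Icc (-e2) (-e1)) (h : 2 * μ * q = -1) :
    μ ∈ Set.Icc (1 / (2 * e2)) (1 / (2 * e1)) := by
  have hμ : μ = 1 / (-2 * q) := by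
    field_simp [show q ≠ 0 by linarith [hq.2]]
    linarith
  rw [hμ]
  exact ⟨one_div_le_one_div_of_le (by linarith [hq.2]) (by linarith [hq.1]),
    one_div_le_one_div_of_le (by positivity) (by linarith [hq.2])⟩

namespace Matrix.IsHermitian

variable {ι : Type*} [Fintype ι] [DecidableEq ι]

theorem dotProduct_mulVec_eq_sum {A : Matrix ι ι ℝ} (hA : A.IsHermitian)
    (x : EuclideanSpace ℝ ι) :
    x ⬝ᵥ A *ᵥ x = ∑ i, hA.eigenvalues i * ⟪hA.eigenvectorBasis i, x⟫ ^ 2 := by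
  have hAx (i : ι) : ⟪hA.eigenvectorBasis i, WithLp.toLp 2 (A *ᵥ x)⟫ =
      hA.eigenvalues i * ⟪hA.eigenvectorBasis i, x⟫ := by
    simp only [EuclideanSpace.inner_eq_star_dotProduct, star_trivial]
    rw [dotProduct_comm, dotProduct_mulVec, ← mulVec_transpose, (isHermitian_iff_isSymm.mp hA).eq,
      hA.mulVec_eigenvectorBasis, smul_dotProduct, smul_eq_mul, dotProduct_comm]
  have hsum := hA.eigenvectorBasis.sum_inner_mul_inner x (WithLp.toLp 2 (A *ᵥ x))
  rw [EuclideanSpace.inner_eq_star_dotProduct, star_trivial, dotProduct_comm] at hsum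
  rw [← hsum]
  refine Finset.sum_congr rfl fun i _ => ?_
  rw [hAx, real_inner_comm]
  ring

theorem mul_sq_norm_le_dotProduct_mulVec {A : Matrix ι ι ℝ} (hA : A.IsHermitian) {a : ℝ}
    (ha : ∀ i, a ≤ hA.eigenvalues i) (x : EuclideanSpace ℝ ι) :
    a * ‖x‖ ^ 2 ≤ x ⬝ᵥ A *ᵥ x := by
  rw [hA.dotProduct_mulVec_eq_sum, ← hA.eigenvectorBasis.sum_sq_inner_right, Finset.mul_sum]
  gcongr with i
  exact ha i

theorem dotProduct_mulVec_le_mul_sq_norm {A : Matrix ι ι ℝ} (hA : A.IsHermitian) {b : ℝ}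
    (hb : ∀ i, hA.eigenvalues i ≤ b) (x : EuclideanSpace ℝ ι) :
    x ⬝ᵥ A *ᵥ x ≤ b * ‖x‖ ^ 2 := by
  rw [hA.dotProduct_mulVec_eq_sum, ← hA.eigenvectorBasis.sum_sq_inner_right, Finset.mul_sum]
  gcongr with i
  exact hb i

theorem eigenvalues_mem_Icc_of_lyapunov {J P : Matrix ι ι ℝ} (hP : P.IsHermitian)
    (hLyap : P * J + Jᵀ * P = -1) {e1 e2 : ℝ} (he1 : 0 < e1)
    (hmax : ∀ x : EuclideanSpace ℝ ι, x ⬝ᵥ J *ᵥ x ≤ -e1 * ‖x‖ ^ 2)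
    (hmin : ∀ x : EuclideanSpace ℝ ι, -e2 * ‖x‖ ^ 2 ≤ x ⬝ᵥ J *ᵥ x) (i : ι) :
    hP.eigenvalues i ∈ Set.Icc (1 / (2 * e2)) (1 / (2 * e1)) := by
  set v := hP.eigenvectorBasis i
  have hv : ‖v‖ = 1 := hP.eigenvectorBasis.orthonormal.1 i
  have hvv : v ⬝ᵥ v = 1 := by
    have h := real_inner_self_eq_norm_sq v
    rwa [EuclideanSpace.inner_eq_star_dotProduct, star_trivial, hv, one_pow] at h
  have hq : v ⬝ᵥ J *ᵥ v ∈ Set.Icc (-e2) (-e1) := by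
    simpa [hv] using And.intro (hmin v) (hmax v)
  refine one_div_two_mul_mem_Icc_of_two_mul_mul_eq_neg_one he1 hq ?_
  rw [← dotProduct_mulVec_mul_add_transpose_mul (isHermitian_iff_isSymm.mp hP) J
    (hP.mulVec_eigenvectorBasis i), hLyap, neg_mulVec, one_mulVec, dotProduct_neg, hvv]

end Matrix.IsHermitian

theorem stmt0_general {n : ℕ} (J P : Matrix (Fin n) (Fin n) ℝ) (e1 e2 : ℝ)
    (he1 : 0 < e1)
    (hmax : ∀ x : EuclideanSpace ℝ (Fin n), x ⬝ᵥ J.mulVec x ≤ -e1 * ‖x‖ ^ 2)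
    (hmin : ∀ x : EuclideanSpace ℝ (Fin n), -e2 * ‖x‖ ^ 2 ≤ x ⬝ᵥ J.mulVec x)
    (hPsymm : P.IsSymm)
    (hLyap : P * J + Jᵀ * P = -1) :
    ∀ x : EuclideanSpace ℝ (Fin n),
      (1 / (2 * e2)) * ‖x‖ ^ 2 ≤ x ⬝ᵥ P.mulVec x ∧
        x ⬝ᵥ P.mulVec x ≤ (1 / (2 * e1)) * ‖x‖ ^ 2 := by
  have hP : P.IsHermitian := isHermitian_iff_isSymm.mpr hPsymm
  have hμ := hP.eigenvalues_mem_Icc_of_lyapunov hLyap he1 hmax hmin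
  exact fun x => ⟨hP.mul_sq_norm_le_dotProduct_mulVec (fun i => (hμ i).1) x,
    hP.dotProduct_mulVec_le_mul_sq_norm (fun i => (hμ i).2) x⟩

/-- Lyapunov matrix quadratic form sandwich bounds.
The eigenvalue bounds on the symmetric part of `J` are encoded via the
Rayleigh quotient: `-e2 * ‖x‖² ≤ xᵀ J x ≤ -e1 * ‖x‖²`. -/
theorem stmt0 {n : ℕ} (J P : Matrix (Fin n) (Fin n) ℝ) (e1 e2 : ℝ)
    (he1 : 0 < e1) (he2 : 0 < e2)
    (hmax : ∀ x : EuclideanSpace ℝ (Fin n), x ⬝ᵥ J.mulVec x ≤ -e1 * ‖x‖ ^ 2)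
    (hmin : ∀ x : EuclideanSpace ℝ (Fin n), -e2 * ‖x‖ ^ 2 ≤ x ⬝ᵥ J.mulVec x)
    (hPsymm : P.IsSymm) (hPposdef : P.PosDef)
    (hLyap : P * J + Jᵀ * P = -1) :
    ∀ x : EuclideanSpace ℝ (Fin n),
      (1 / (2 * e2)) * ‖x‖ ^ 2 ≤ x ⬝ᵥ P.mulVec x ∧
        x ⬝ᵥ P.mulVec x ≤ (1 / (2 * e1)) * ‖x‖ ^ 2 :=
  stmt0_general J P e1 e2 he1 hmax hmin hPsymm hLyap
end

section
/- Let J be a real n×n matrix such that J + Jᵀ is negative definite. Then the integral P = ∫₀^∞ exp(Jᵀ t) exp(J t) dt converges and satisfies the Lyapunov equation P J + Jᵀ P = -I. -/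
/-!
With `E(t) = exp (t J)` the integrand is `F(t) = E(t)ᵀ E(t)`, so `F 0 = 1` and
`F' = Jᵀ F + F J = Eᵀ (J + Jᵀ) E`. By compactness of the unit sphere, `v ⬝ (J + Jᵀ) v ≤ -c ‖v‖²`
for some `c > 0`; hence `g(t) = x ⬝ F(t) x = ‖E(t) x‖²` satisfies `g' ≤ -c g`, and Grönwall gives
`‖E(t) x‖² ≤ e^{-ct} ‖x‖²`. Every entry of `F` is then bounded by `e^{-ct}`, and integrating
`F' = Jᵀ F + F J` over `(0, ∞)` yields `Jᵀ P + P J = 0 - F 0 = -1`.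
-/

open Matrix MeasureTheory Set Filter

section Coercive

variable {E : Type*} [NormedAddCommGroup E] [NormedSpace ℝ E] [ProperSpace E]

theorem exists_pos_le_neg_mul_norm_sq {q : E → ℝ} (hq : Continuous q)
    (hsmul : ∀ (a : ℝ) v, q (a • v) = a ^ 2 * q v) (hneg : ∀ v, v ≠ 0 → q v < 0) :
    ∃ c > 0, ∀ v, q v ≤ -c * ‖v‖ ^ 2 := by
  have hq0 : q 0 = 0 := by simpa using hsmul 0 0
  have hunit : ∀ v : E, v ≠ 0 → ‖v‖⁻¹ • v ∈ Metric.sphere (0 : E) 1 := fun v hv => by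
    simp [norm_smul, hv]
  rcases (Metric.sphere (0 : E) 1).eq_empty_or_nonempty with hempty | hne
  · refine ⟨1, one_pos, fun v => ?_⟩
    obtain rfl : v = 0 := by_contra fun hv => by simpa [hempty] using hunit v hv
    simp [hq0]
  obtain ⟨v₀, hv₀, hmax⟩ := (isCompact_sphere (0 : E) 1).exists_isMaxOn hne hq.continuousOn
  refine ⟨-q v₀, neg_pos.2 (hneg v₀ (ne_zero_of_mem_unit_sphere ⟨v₀, hv₀⟩)), fun v => ?_⟩
  rcases eq_or_ne v 0 with rfl | hv
  · simp [hq0]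
  have h : ‖v‖⁻¹ ^ 2 * q v ≤ q v₀ := hsmul _ v ▸ hmax (hunit v hv)
  have hv_pos : 0 < ‖v‖ := norm_pos_iff.2 hv
  calc q v = ‖v‖ ^ 2 * (‖v‖⁻¹ ^ 2 * q v) := by field_simp
    _ ≤ ‖v‖ ^ 2 * q v₀ := by gcongr
    _ = -(-q v₀) * ‖v‖ ^ 2 := by ring

end Coercive

theorem le_mul_exp_of_hasDerivAt_le_neg_mul {g g' : ℝ → ℝ} {c t : ℝ}
    (hg : ∀ s, HasDerivAt g (g' s) s) (hle : ∀ s, g' s ≤ -c * g s) (ht : 0 ≤ t) :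
    g t ≤ g 0 * Real.exp (-c * t) := by
  simpa [gronwallBound_ε0] using le_gronwallBound_of_liminf_deriv_right_le (K := -c) (ε := 0)
    (fun s _ => (hg s).continuousAt.continuousWithinAt)
    (fun s _ _ hr => (hg s).hasDerivWithinAt.liminf_right_slope_le hr) le_rfl
    (fun s _ => by simpa using hle s) t ⟨ht, le_rfl⟩

theorem Matrix.exists_pos_dotProduct_mulVec_le_neg {ι : Type*} [Fintype ι] {S : Matrix ι ι ℝ}
    (hS : ∀ x : EuclideanSpace ℝ ι, x ≠ 0 → x ⬝ᵥ S *ᵥ x < 0) :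
    ∃ c > 0, ∀ v : ι → ℝ, v ⬝ᵥ S *ᵥ v ≤ -c * (v ⬝ᵥ v) := by
  obtain ⟨c, hc, hle⟩ :=
    exists_pos_le_neg_mul_norm_sq (q := fun x : EuclideanSpace ℝ ι => x ⬝ᵥ S *ᵥ x) (by fun_prop)
      (fun a x => by simp [mulVec_smul]; ring) hS
  refine ⟨c, hc, fun v => ?_⟩
  have h := hle (WithLp.toLp 2 v)
  rw [EuclideanSpace.real_norm_sq_eq] at h
  simpa [dotProduct, sq] using h

theorem Matrix.two_mul_abs_dotProduct_le {ι : Type*} [Fintype ι] (a b : ι → ℝ) :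
    2 * |a ⬝ᵥ b| ≤ a ⬝ᵥ a + b ⬝ᵥ b := by
  have h₁ := dotProduct_self_star_nonneg (a + b)
  have h₂ := dotProduct_self_star_nonneg (a - b)
  simp only [star_trivial, add_dotProduct, dotProduct_add, sub_dotProduct, dotProduct_sub,
    dotProduct_comm b a] at h₁ h₂
  cases abs_cases (a ⬝ᵥ b) <;> linarith

section EntrywiseIntegral

variable {α : Type*} [MeasurableSpace α] {μ : Measure α} {l m p : Type*} [Fintype m]

theorem Matrix.integrable_mul_apply {G : α → Matrix l m ℝ}
    (hG : ∀ i j, Integrable (fun a => G a i j) μ) (B : Matrix m p ℝ) (i : l) (k : p) :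
    Integrable (fun a => (G a * B) i k) μ := by
  simp only [mul_apply]
  exact integrable_finsetSum _ fun j _ => (hG i j).mul_const _

theorem Matrix.integrable_mul_apply' {G : α → Matrix m p ℝ}
    (hG : ∀ i j, Integrable (fun a => G a i j) μ) (B : Matrix l m ℝ) (i : l) (k : p) :
    Integrable (fun a => (B * G a) i k) μ := by
  simp only [mul_apply]
  exact integrable_finsetSum _ fun j _ => (hG j k).const_mul _

theorem Matrix.integral_mul_apply {G : α → Matrix l m ℝ}
    (hG : ∀ i j, Integrable (fun a => G a i j) μ) (B : Matrix m p ℝ) (i : l) (k : p) :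
    ∫ a, (G a * B) i k ∂μ = (of (fun i j => ∫ a, G a i j ∂μ) * B) i k := by
  simp only [mul_apply, of_apply, ← integral_mul_const]
  exact integral_finsetSum _ fun j _ => (hG i j).mul_const _

theorem Matrix.integral_mul_apply' {G : α → Matrix m p ℝ}
    (hG : ∀ i j, Integrable (fun a => G a i j) μ) (B : Matrix l m ℝ) (i : l) (k : p) :
    ∫ a, (B * G a) i k ∂μ = (B * of (fun i j => ∫ a, G a i j ∂μ)) i k := by
  simp only [mul_apply, of_apply, ← integral_const_mul]
  exact integral_finsetSum _ fun j _ => (hG j k).const_mul _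

end EntrywiseIntegral

noncomputable def lyapunovIntegrand {ι : Type*} [Fintype ι] [DecidableEq ι] (J : Matrix ι ι ℝ)
    (t : ℝ) : Matrix ι ι ℝ :=
  NormedSpace.exp (t • Jᵀ) * NormedSpace.exp (t • J)

noncomputable def lyapunovIntegral {ι : Type*} [Fintype ι] [DecidableEq ι] (J : Matrix ι ι ℝ) :
    Matrix ι ι ℝ :=
  of fun i j => ∫ t in Ioi 0, lyapunovIntegrand J t i j

section Lyapunov

-- Any normed-algebra structure would do for differentiating `exp`; the statements below
-- only involve the product topology on matrices.
attribute [local instance] Matrix.linftyOpNormedAddCommGroup Matrix.linftyOpNormedSpace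
  Matrix.linftyOpNormedRing Matrix.linftyOpNormedAlgebra

variable {ι : Type*} [Fintype ι]

theorem HasDerivAt.dotProduct_mulVec {f : ℝ → Matrix ι ι ℝ} {f' : Matrix ι ι ℝ} {t : ℝ}
    (hf : HasDerivAt f f' t) (x y : ι → ℝ) :
    HasDerivAt (fun s => x ⬝ᵥ f s *ᵥ y) (x ⬝ᵥ f' *ᵥ y) t :=
  let L : Matrix ι ι ℝ →ₗ[ℝ] ℝ :=
    { toFun := fun M => x ⬝ᵥ M *ᵥ y
      map_add' := fun M N => by simp only [add_mulVec, dotProduct_add]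
      map_smul' := fun a M => by simp only [smul_mulVec, dotProduct_smul, RingHom.id_apply] }
  L.toContinuousLinearMap.hasFDerivAt.comp_hasDerivAt t hf

theorem HasDerivAt.matrix_apply [DecidableEq ι] {f : ℝ → Matrix ι ι ℝ} {f' : Matrix ι ι ℝ}
    {t : ℝ} (hf : HasDerivAt f f' t) (i j : ι) :
    HasDerivAt (fun s => f s i j) (f' i j) t := by
  simpa using hf.dotProduct_mulVec (Pi.single i 1) (Pi.single j 1)

variable [DecidableEq ι] (J : Matrix ι ι ℝ)

theorem lyapunovIntegrand_zero : lyapunovIntegrand J 0 = 1 := by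
  simp [lyapunovIntegrand]

theorem lyapunovIntegrand_eq (t : ℝ) :
    lyapunovIntegrand J t = (NormedSpace.exp (t • J))ᵀ * NormedSpace.exp (t • J) := by
  rw [lyapunovIntegrand, ← transpose_smul, exp_transpose]

theorem hasDerivAt_lyapunovIntegrand (t : ℝ) :
    HasDerivAt (lyapunovIntegrand J)
      (Jᵀ * lyapunovIntegrand J t + lyapunovIntegrand J t * J) t := by
  have h := (hasDerivAt_exp_smul_const' Jᵀ t).mul (hasDerivAt_exp_smul_const J t)
  rw [Matrix.mul_assoc, ← Matrix.mul_assoc (NormedSpace.exp _)] at h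
  exact h

theorem continuous_lyapunovIntegrand : Continuous (lyapunovIntegrand J) :=
  continuous_iff_continuousAt.2 fun t => (hasDerivAt_lyapunovIntegrand J t).continuousAt

theorem transpose_mul_add_mul_lyapunovIntegrand (t : ℝ) :
    Jᵀ * lyapunovIntegrand J t + lyapunovIntegrand J t * J =
      (NormedSpace.exp (t • J))ᵀ * (J + Jᵀ) * NormedSpace.exp (t • J) := by
  have hcomm : Commute J (NormedSpace.exp (t • J)) := ((Commute.refl J).smul_right t).exp_right
  rw [lyapunovIntegrand_eq, ← Matrix.mul_assoc Jᵀ, ← transpose_mul, ← hcomm.eq, transpose_mul]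
  simp only [Matrix.mul_assoc]
  rw [← hcomm.eq, ← Matrix.mul_add, ← Matrix.add_mul, add_comm Jᵀ]

omit [DecidableEq ι] in
theorem dotProduct_transpose_mul_mulVec (A B : Matrix ι ι ℝ) (x y : ι → ℝ) :
    x ⬝ᵥ (Aᵀ * B) *ᵥ y = (A *ᵥ x) ⬝ᵥ B *ᵥ y := by
  rw [← mulVec_mulVec, dotProduct_mulVec, vecMul_transpose]

variable {J} {c : ℝ} (hcoer : ∀ v : ι → ℝ, v ⬝ᵥ (J + Jᵀ) *ᵥ v ≤ -c * (v ⬝ᵥ v))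
include hcoer

theorem dotProduct_lyapunovIntegrand_mulVec_le (x : ι → ℝ) {t : ℝ} (ht : 0 ≤ t) :
    x ⬝ᵥ lyapunovIntegrand J t *ᵥ x ≤ (x ⬝ᵥ x) * Real.exp (-c * t) := by
  have hdiss : ∀ s, x ⬝ᵥ (Jᵀ * lyapunovIntegrand J s + lyapunovIntegrand J s * J) *ᵥ x ≤
      -c * (x ⬝ᵥ lyapunovIntegrand J s *ᵥ x) := fun s => by
    rw [transpose_mul_add_mul_lyapunovIntegrand, Matrix.mul_assoc,
      dotProduct_transpose_mul_mulVec, ← mulVec_mulVec, lyapunovIntegrand_eq,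
      dotProduct_transpose_mul_mulVec]
    exact hcoer _
  simpa [lyapunovIntegrand_zero] using le_mul_exp_of_hasDerivAt_le_neg_mul
    (fun s => (hasDerivAt_lyapunovIntegrand J s).dotProduct_mulVec x x) hdiss ht

theorem abs_lyapunovIntegrand_apply_le (i j : ι) {t : ℝ} (ht : 0 ≤ t) :
    |lyapunovIntegrand J t i j| ≤ Real.exp (-c * t) := by
  set A := NormedSpace.exp (t • J)
  have hentry : ∀ k l, lyapunovIntegrand J t k l = (A *ᵥ Pi.single k 1) ⬝ᵥ A *ᵥ Pi.single l 1 :=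
    fun k l => by
      rw [← dotProduct_transpose_mul_mulVec, ← lyapunovIntegrand_eq]
      simp
  have hdiag : ∀ k, lyapunovIntegrand J t k k ≤ Real.exp (-c * t) := fun k => by
    simpa using dotProduct_lyapunovIntegrand_mulVec_le hcoer (Pi.single k 1) ht
  have := two_mul_abs_dotProduct_le (A *ᵥ Pi.single i 1) (A *ᵥ Pi.single j 1)
  rw [← hentry, ← hentry, ← hentry] at this
  linarith [hdiag i, hdiag j]

theorem integrableOn_lyapunovIntegrand_apply (hc : 0 < c) (i j : ι) :
    IntegrableOn (fun t => lyapunovIntegrand J t i j) (Ioi 0) := by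
  refine (exp_neg_integrableOn_Ioi 0 hc).mono'
    ((continuous_lyapunovIntegrand J).matrix_elem i j).aestronglyMeasurable ?_
  filter_upwards [ae_restrict_mem measurableSet_Ioi] with t ht
  exact abs_lyapunovIntegrand_apply_le hcoer i j (le_of_lt ht)

theorem tendsto_lyapunovIntegrand_apply (hc : 0 < c) (i j : ι) :
    Tendsto (fun t => lyapunovIntegrand J t i j) atTop (nhds 0) := by
  refine squeeze_zero_norm' ?_ (Real.tendsto_exp_atBot.comp
    (tendsto_id.const_mul_atTop_of_neg (neg_neg_of_pos hc)))
  filter_upwards [eventually_ge_atTop 0] with t ht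
  exact abs_lyapunovIntegrand_apply_le hcoer i j ht

theorem lyapunovIntegral_mul_add_transpose_mul (hc : 0 < c) :
    lyapunovIntegral J * J + Jᵀ * lyapunovIntegral J = -1 := by
  ext i j
  have hint := integrableOn_lyapunovIntegrand_apply hcoer hc
  have hftc := integral_Ioi_of_hasDerivAt_of_tendsto'
    (fun t _ => (hasDerivAt_lyapunovIntegrand J t).matrix_apply i j)
    ((integrable_mul_apply' hint Jᵀ i j).add (integrable_mul_apply hint J i j))
    (tendsto_lyapunovIntegrand_apply hcoer hc i j)
  simp only [Matrix.add_apply] at hftc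
  rw [integral_add (integrable_mul_apply' hint Jᵀ i j) (integrable_mul_apply hint J i j),
    integral_mul_apply' hint, integral_mul_apply hint, lyapunovIntegrand_zero] at hftc
  rw [Matrix.add_apply, add_comm, lyapunovIntegral, hftc, zero_sub, Matrix.neg_apply]

end Lyapunov

/-- convergence (entrywise) of `∫₀^∞ exp(Jᵀ t) exp(J t) dt` and the
Lyapunov equation, when `J + Jᵀ` is negative definite. -/
theorem stmt1 {n : ℕ} (J : Matrix (Fin n) (Fin n) ℝ)
    (hneg : ∀ x : EuclideanSpace ℝ (Fin n), x ≠ 0 → x ⬝ᵥ (J + Jᵀ).mulVec x < 0) :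
    ∃ P : Matrix (Fin n) (Fin n) ℝ,
      (∀ i j, IntegrableOn
          (fun t : ℝ => (NormedSpace.exp (t • Jᵀ) * NormedSpace.exp (t • J)) i j)
          (Set.Ioi 0)) ∧
      (∀ i j, P i j =
          ∫ t in Set.Ioi (0 : ℝ),
            (NormedSpace.exp (t • Jᵀ) * NormedSpace.exp (t • J)) i j) ∧
      P * J + Jᵀ * P = -1 := by
  obtain ⟨c, hc, hcoer⟩ := exists_pos_dotProduct_mulVec_le_neg hneg
  exact ⟨lyapunovIntegral J, integrableOn_lyapunovIntegrand_apply hcoer hc, fun i j => rfl,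
    lyapunovIntegral_mul_add_transpose_mul hcoer hc⟩
end

section
/- Let u : [t₀, ∞) → ℝⁿ be differentiable with u̇(t) = η G(u(t)) where ‖G(u) - F(u)‖ ≤ ε uniformly, F(u*) = 0, F(u) = J(u-u*) + g(u) with ‖g(u)‖ ≤ L‖u-u*‖² on the ball B(u*, r), J + Jᵀ ⪯ -2e₁ I, J + Jᵀ ⪰ -2e₂ I for 0 < e₁ ≤ e₂, and P solves PJ + JᵀP = -I. Then for V₁(t) = (u(t)-u*)ᵀP(u(t)-u*), whenever ‖u(t)-u*‖ < r: V₁'(t) ≤ -η‖u(t)-u*‖² + (ηL/e₁)‖u(t)-u*‖³ + (η/e₁) ε ‖u(t)-u*‖. -/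
open scoped RealInnerProductSpace NNReal

/-!
Write `x = u - u*` and `Q = P + Pᵀ`. Along the flow `V₁' = η ⟪x, Q G(u)⟫`, and
`G(u) = J x + w` with `‖w‖ ≤ ε + L‖x‖²` on the ball. The Lyapunov equation gives
`⟪x, Q J x⟫ = -‖x‖²`. For a unit eigenvector `v` of the symmetric `Q` with eigenvalue `μ`
it also gives `μ ⟪v, J v⟫ = -1`, so `0 < μ ≤ 1/e₁`; hence `‖Q‖ ≤ 1/e₁`, and Cauchy–Schwarz
bounds the remaining term `⟪x, Q w⟫` by `‖x‖ (ε + L‖x‖²) / e₁`.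
-/

namespace ContinuousLinearMap

open Module.End

variable {E : Type*} [NormedAddCommGroup E] [InnerProductSpace ℝ E] [CompleteSpace E]

theorem norm_le_of_forall_hasEigenvalue [FiniteDimensional ℝ E] {Q : E →L[ℝ] E}
    (hQ : IsSelfAdjoint Q) {c : ℝ} (hc : 0 ≤ c)
    (h : ∀ μ, HasEigenvalue (Q : Module.End ℝ E) μ → |μ| ≤ c) : ‖Q‖ ≤ c := by
  lift c to ℝ≥0 using hc
  suffices spectralRadius ℝ Q ≤ c by
    rwa [Q.spectralRadius_eq_nnnorm hQ, ENNReal.coe_le_coe, ← NNReal.coe_le_coe,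
      coe_nnnorm] at this
  refine iSup₂_le fun μ hμ => ?_
  rw [spectrum_eq, ← hasEigenvalue_iff_mem_spectrum] at hμ
  rw [ENNReal.coe_le_coe, ← NNReal.coe_le_coe, coe_nnnorm, Real.norm_eq_abs]
  exact h μ hμ

theorem abs_le_of_hasEigenvalue_of_lyapunov {Q J : E →L[ℝ] E} (hQ : IsSelfAdjoint Q)
    (hQJ : ∀ v, ⟪v, Q (J v)⟫ = -‖v‖ ^ 2) {e₁ : ℝ} (he₁ : 0 < e₁)
    (hJ : ∀ v, ⟪v, J v⟫ ≤ -e₁ * ‖v‖ ^ 2) {μ : ℝ}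
    (hμ : HasEigenvalue (Q : Module.End ℝ E) μ) : |μ| ≤ 1 / e₁ := by
  obtain ⟨v, hv⟩ := hμ.exists_hasEigenvector
  have hv0 : 0 < ‖v‖ ^ 2 := by have := hv.2; positivity
  have hμJ : μ * ⟪v, J v⟫ = -‖v‖ ^ 2 :=
    calc μ * ⟪v, J v⟫ = ⟪Q v, J v⟫ := by
          rw [← coe_coe Q, hv.apply_eq_smul, real_inner_smul_left]
      _ = ⟪v, Q (J v)⟫ := hQ.isSymmetric v (J v)
      _ = -‖v‖ ^ 2 := hQJ v
  have hJv := hJ v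
  have hJv_neg : ⟪v, J v⟫ < 0 := by nlinarith
  have hμ0 : 0 ≤ μ := by nlinarith
  rw [abs_of_nonneg hμ0, le_div_iff₀ he₁]
  nlinarith

theorem inner_map_add_inner_map_swap (P : E →L[ℝ] E) (x y : E) :
    ⟪x, P y⟫ + ⟪y, P x⟫ = ⟪x, (P + adjoint P) y⟫ := by
  rw [add_apply, inner_add_right, adjoint_inner_right, real_inner_comm y]

theorem inner_add_adjoint_comp_of_lyapunov {P J : E →L[ℝ] E}
    (hLyap : P.comp J + (adjoint J).comp P = -1) (v : E) :
    ⟪v, (P + adjoint P) (J v)⟫ = -‖v‖ ^ 2 := by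
  have hv : ⟪v, (P.comp J + (adjoint J).comp P) v⟫ = -‖v‖ ^ 2 := by
    simp only [hLyap, neg_apply, one_apply_eq_self, inner_neg_right,
      real_inner_self_eq_norm_sq]
  rw [← hv, add_apply, add_apply, inner_add_right, inner_add_right, comp_apply, comp_apply,
    adjoint_inner_right, adjoint_inner_right, real_inner_comm (J v)]

theorem norm_add_adjoint_le_of_lyapunov [FiniteDimensional ℝ E] {P J : E →L[ℝ] E}
    (hLyap : P.comp J + (adjoint J).comp P = -1) {e₁ : ℝ} (he₁ : 0 < e₁)
    (hJ : ∀ v, ⟪v, J v⟫ ≤ -e₁ * ‖v‖ ^ 2) : ‖P + adjoint P‖ ≤ 1 / e₁ := by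
  have hQ : IsSelfAdjoint (P + adjoint P) := by
    simpa only [star_eq_adjoint] using IsSelfAdjoint.add_star_self P
  exact norm_le_of_forall_hasEigenvalue hQ (by positivity) fun μ hμ =>
    abs_le_of_hasEigenvalue_of_lyapunov hQ (inner_add_adjoint_comp_of_lyapunov hLyap) he₁ hJ hμ

theorem inner_add_adjoint_apply_add_le_of_lyapunov [FiniteDimensional ℝ E] {P J : E →L[ℝ] E}
    (hLyap : P.comp J + (adjoint J).comp P = -1) {e₁ : ℝ} (he₁ : 0 < e₁)
    (hJ : ∀ v, ⟪v, J v⟫ ≤ -e₁ * ‖v‖ ^ 2) (x w : E) :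
    ⟪x, (P + adjoint P) (J x + w)⟫ ≤ -‖x‖ ^ 2 + 1 / e₁ * (‖x‖ * ‖w‖) := by
  rw [map_add, inner_add_right, inner_add_adjoint_comp_of_lyapunov hLyap]
  gcongr
  calc ⟪x, (P + adjoint P) w⟫ ≤ ‖x‖ * (‖P + adjoint P‖ * ‖w‖) :=
        (real_inner_le_norm _ _).trans (by gcongr; exact le_opNorm _ _)
    _ ≤ 1 / e₁ * (‖x‖ * ‖w‖) := by
        rw [mul_left_comm]
        gcongr
        exact norm_add_adjoint_le_of_lyapunov hLyap he₁ hJ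

end ContinuousLinearMap

theorem HasDerivAt.inner_map_sub_const {E : Type*} [NormedAddCommGroup E]
    [InnerProductSpace ℝ E] [CompleteSpace E] {u : ℝ → E} {u' : E} {t : ℝ}
    (hu : HasDerivAt u u' t) (P : E →L[ℝ] E) (c : E) :
    HasDerivAt (fun τ => ⟪u τ - c, P (u τ - c)⟫)
      ⟪u t - c, (P + ContinuousLinearMap.adjoint P) u'⟫ t := by
  have hv := hu.sub_const c
  rw [← P.inner_map_add_inner_map_swap]
  exact hv.inner ℝ (P.hasFDerivAt.comp_hasDerivAt t hv)

theorem stmt16_general {n : ℕ}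
    (u : ℝ → EuclideanSpace ℝ (Fin n))
    (F G g : EuclideanSpace ℝ (Fin n) → EuclideanSpace ℝ (Fin n))
    (ustar : EuclideanSpace ℝ (Fin n))
    (J P : EuclideanSpace ℝ (Fin n) →L[ℝ] EuclideanSpace ℝ (Fin n))
    (t₀ η ε L r e₁ : ℝ)
    (hη : 0 < η) (he₁ : 0 < e₁)
    (hu : ∀ t, t₀ ≤ t → HasDerivAt u (η • G (u t)) t)
    (hGF : ∀ x, ‖G x - F x‖ ≤ ε)
    (hFdecomp : ∀ x, F x = J (x - ustar) + g x)
    (hg : ∀ x, ‖x - ustar‖ < r → ‖g x‖ ≤ L * ‖x - ustar‖ ^ 2)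
    (hJ1 : ∀ x, ⟪x, J x⟫ ≤ -e₁ * ‖x‖ ^ 2)
    (hLyap : P.comp J + (ContinuousLinearMap.adjoint J).comp P = -1) :
    ∀ t, t₀ ≤ t → ‖u t - ustar‖ < r →
      ∃ D, HasDerivAt (fun τ => ⟪u τ - ustar, P (u τ - ustar)⟫) D t ∧
        D ≤ -η * ‖u t - ustar‖ ^ 2 + η * L / e₁ * ‖u t - ustar‖ ^ 3 +
            η / e₁ * ε * ‖u t - ustar‖ := by
  intro t ht htr
  refine ⟨_, (hu t ht).inner_map_sub_const P ustar, ?_⟩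
  set x := u t - ustar
  have hw : ‖G (u t) - J x‖ ≤ ε + L * ‖x‖ ^ 2 :=
    calc ‖G (u t) - J x‖ = ‖(G (u t) - F (u t)) + g (u t)‖ := by
          rw [hFdecomp, sub_add_eq_sub_sub, sub_add_cancel]
      _ ≤ ε + L * ‖x‖ ^ 2 := (norm_add_le _ _).trans (add_le_add (hGF _) (hg _ htr))
  calc ⟪x, (P + ContinuousLinearMap.adjoint P) (η • G (u t))⟫
      = η * ⟪x, (P + ContinuousLinearMap.adjoint P) (J x + (G (u t) - J x))⟫ := by
        rw [map_smul, real_inner_smul_right, add_sub_cancel]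
    _ ≤ η * (-‖x‖ ^ 2 + 1 / e₁ * (‖x‖ * (ε + L * ‖x‖ ^ 2))) := by
        gcongr
        exact (P.inner_add_adjoint_apply_add_le_of_lyapunov hLyap he₁ hJ1 x _).trans
          (by gcongr)
    _ = -η * ‖x‖ ^ 2 + η * L / e₁ * ‖x‖ ^ 3 + η / e₁ * ε * ‖x‖ := by
        field_simp
        ring

/-- composite Lyapunov derivative bound along the perturbed flow
`u̇ = η G(u)`, combining the nominal quadratic decrease, the cubic Taylor
remainder, and the uniform perturbation term. -/
theorem stmt16 {n : ℕ}
    (u : ℝ → EuclideanSpace ℝ (Fin n))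
    (F G g : EuclideanSpace ℝ (Fin n) → EuclideanSpace ℝ (Fin n))
    (ustar : EuclideanSpace ℝ (Fin n))
    (J P : EuclideanSpace ℝ (Fin n) →L[ℝ] EuclideanSpace ℝ (Fin n))
    (t₀ η ε L r e₁ e₂ : ℝ)
    (hη : 0 < η) (hε : 0 ≤ ε) (hL : 0 < L) (hr : 0 < r) (he₁ : 0 < e₁)
    (hee : e₁ ≤ e₂)
    (hu : ∀ t, t₀ ≤ t → HasDerivAt u (η • G (u t)) t)
    (hGF : ∀ x, ‖G x - F x‖ ≤ ε)
    (hF0 : F ustar = 0)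
    (hFdecomp : ∀ x, F x = J (x - ustar) + g x)
    (hg : ∀ x, ‖x - ustar‖ < r → ‖g x‖ ≤ L * ‖x - ustar‖ ^ 2)
    (hJ1 : ∀ x, ⟪x, J x⟫ ≤ -e₁ * ‖x‖ ^ 2)
    (hJ2 : ∀ x, -e₂ * ‖x‖ ^ 2 ≤ ⟪x, J x⟫)
    (hLyap : P.comp J + (ContinuousLinearMap.adjoint J).comp P = -1) :
    ∀ t, t₀ ≤ t → ‖u t - ustar‖ < r →
      ∃ D, HasDerivAt (fun τ => ⟪u τ - ustar, P (u τ - ustar)⟫) D t ∧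
        D ≤ -η * ‖u t - ustar‖ ^ 2 + η * L / e₁ * ‖u t - ustar‖ ^ 3 +
            η / e₁ * ε * ‖u t - ustar‖ :=
  stmt16_general u F G g ustar J P t₀ η ε L r e₁ hη he₁ hu hGF hFdecomp hg hJ1 hLyap
end
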